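/- arXiv:1104.1538 — 8 statements merged into one kernel-verified Lean document; each statement's English description precedes it below -/
import Mathlib

section
/- Let B be a finite set and V = ℝ^B with the pointwise partial order and the standard inner product ⟨v,w⟩ = ∑_{b∈B} v(b)·w(b). Let 𝒜 ⊆ V be a finite set of points all of whose coordinates are nonnegative, let w : 𝒜 → ℝ, and let E = {x ∈ V : ⟨a,x⟩ ≥ −w(a) for all a ∈ 𝒜}. If E is bounded from below (i.e., there is M ∈ ℝ with x(b) ≥ M for all x ∈ E and b ∈ B), then a point x ∈ E is a minimal element of E with respect to the pointwise partial order if and only if there do not exist r ∈ V with r ≠ 0 and ⟨a,r⟩ ≥ 0 for all a ∈ 𝒜, and λ > 0, such that x − λ·r ∈ E. -/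
/-! Translating a point of the envelope along a ray keeps it in the envelope, so if the
envelope is bounded from below every ray `r` with `x - λ r` in it must be nonnegative, and then
`x - λ r ⪯ x` contradicts minimality. Conversely, if `y ⪯ x` lies in the envelope, then `x - y`
is nonnegative, hence a ray because the points of `𝒜` are nonnegative, and `y = x - 1 • (x - y)`. -/

lemma add_smul_mem_envelope {B : Type*} [Fintype B] {𝒜 : Finset (B → ℝ)}
    {w : (B → ℝ) → ℝ} {y r : B → ℝ} (hy : ∀ a ∈ 𝒜, -w a ≤ ∑ b, a b * y b)
    (hr : ∀ a ∈ 𝒜, 0 ≤ ∑ b, a b * r b) {t : ℝ} (ht : 0 ≤ t) :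
    ∀ a ∈ 𝒜, -w a ≤ ∑ b, a b * (y + t • r) b := by
  intro a ha
  have hsplit : ∑ b, a b * (y + t • r) b = ∑ b, a b * y b + t * ∑ b, a b * r b := by
    simp only [Pi.add_apply, Pi.smul_apply, smul_eq_mul, mul_add, Finset.sum_add_distrib,
      Finset.mul_sum, mul_left_comm t]
  rw [hsplit]
  linarith [hy a ha, mul_nonneg ht (hr a ha)]

lemma nonneg_of_forall_add_smul_mem {B : Type*} {S : Set (B → ℝ)}
    (hbdd : ∃ M : ℝ, ∀ x ∈ S, ∀ b : B, M ≤ x b) {y r : B → ℝ}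
    (hmem : ∀ t : ℝ, 0 ≤ t → y + t • r ∈ S) : 0 ≤ r := by
  obtain ⟨M, hM⟩ := hbdd
  intro b
  rw [Pi.zero_apply]
  by_contra! hrb
  have hyb : M ≤ y b := by simpa using hM _ (hmem 0 le_rfl) b
  -- chosen so that `y b + t * r b = M - 1`
  set t := (y b - M + 1) / -r b
  have hMt : M ≤ y b + t * r b := hM _ (hmem t (div_nonneg (by linarith) (by linarith))) b
  have ht : t * -r b = y b - M + 1 := div_mul_cancel₀ _ (neg_ne_zero.mpr hrb.ne)
  linarith

theorem stmt_0_general {B : Type*} [Fintype B] (𝒜 : Finset (B → ℝ))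
    (hpos : ∀ a ∈ 𝒜, ∀ b : B, 0 ≤ a b)
    (w : (B → ℝ) → ℝ)
    (E : Set (B → ℝ))
    (hE : E = {x : B → ℝ | ∀ a ∈ 𝒜, -w a ≤ ∑ b : B, a b * x b})
    (hbdd : ∃ M : ℝ, ∀ x ∈ E, ∀ b : B, M ≤ x b)
    (x : B → ℝ) :
    (∀ y ∈ E, y ≤ x → y = x) ↔
      ¬ ∃ (r : B → ℝ) (lam : ℝ), r ≠ 0 ∧ (∀ a ∈ 𝒜, 0 ≤ ∑ b : B, a b * r b) ∧
        0 < lam ∧ x - lam • r ∈ E := by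
  subst hE
  constructor
  · rintro hmin ⟨r, lam, hr0, hray, hlam, hy⟩
    have hr : 0 ≤ r :=
      nonneg_of_forall_add_smul_mem hbdd fun _ ht => add_smul_mem_envelope hy hray ht
    have hfix : x - lam • r = x := hmin _ hy (sub_le_self _ (smul_nonneg hlam.le hr))
    exact hr0 ((smul_eq_zero.mp (sub_eq_self.mp hfix)).resolve_left hlam.ne')
  · rintro hno y hy hle
    by_contra hne
    refine hno ⟨x - y, 1, sub_ne_zero.mpr (Ne.symm hne), fun a ha => ?_, one_pos, by simpa using hy⟩
    exact Finset.sum_nonneg fun b _ => mul_nonneg (hpos a ha b) (sub_nonneg.mpr (hle b))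

/-- Lemma 2.1 (minimal elements of the envelope):
If the envelope `E` of a positive point configuration `𝒜` with weight `w`
is bounded from below, then `x ∈ E` is minimal (w.r.t. the pointwise
partial order) iff there is no nonzero ray `r` of `E` and `λ > 0` with
`x - λ • r ∈ E`. -/
theorem stmt_0 {B : Type*} [Fintype B] (𝒜 : Finset (B → ℝ))
    (hpos : ∀ a ∈ 𝒜, ∀ b : B, 0 ≤ a b)
    (w : (B → ℝ) → ℝ)
    (E : Set (B → ℝ))
    (hE : E = {x : B → ℝ | ∀ a ∈ 𝒜, -w a ≤ ∑ b : B, a b * x b})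
    (hbdd : ∃ M : ℝ, ∀ x ∈ E, ∀ b : B, M ≤ x b)
    (x : B → ℝ) (hx : x ∈ E) :
    (∀ y ∈ E, y ≤ x → y = x) ↔
      ¬ ∃ (r : B → ℝ) (lam : ℝ), r ≠ 0 ∧ (∀ a ∈ 𝒜, 0 ≤ ∑ b : B, a b * r b) ∧
        0 < lam ∧ x - lam • r ∈ E :=
  stmt_0_general 𝒜 hpos w E hE hbdd x
end

section
/- Let X and Y be disjoint finite sets with |X| ≥ 2 and |Y| ≥ 2, and let A be a nonempty proper subset of X and B a nonempty proper subset of Y. Let B̄(X,Y) = {e_x + e_y : x ∈ X, y ∈ Y} ⊆ ℝ^{X∪Y}, and define g : ℝ^{X∪Y} → ℝ by g(f) = ∑_{i∈A} f(i) − ∑_{j∈B} f(j). Then: (i) there exists a point f in the relative (intrinsic) interior of the convex hull of B̄(X,Y) with g(f) = 0; and (ii) for all x, x' ∈ X and y, y' ∈ Y with x = x' or y = y', it is not the case that g(e_x + e_y) > 0 and g(e_{x'} + e_{y'}) < 0. (Together these say that the hyperplane ∑_{i∈A} f(i) = ∑_{j∈B} f(j) meets the relative interior of conv B̄(X,Y)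 and does not separate the endpoints of any edge of the point configuration B̄(X,Y), i.e., it defines a split of B̄(X,Y).) -/
/-!
At the vertex `e_x + e_y` the functional `g` takes the value `[x ∈ A] - [y ∈ B]`: it is positive
only when `x ∈ A`, `y ∉ B` and negative only when `x ∉ A`, `y ∈ B`, so vertices of opposite signs
differ in both coordinates and span no edge. Since `A` and `B` are nonempty and proper, both signs
occur; shrinking a relative-interior point towards a vertex of the opposite sign by a homothety of
ratio in `(0, 1]` keeps it in the relative interior and reaches the hyperplane.
-/

open Set AffineMap

section IntrinsicInterior

theorem intrinsicInterior_mono_of_affineSpan_eq {𝕜 V P : Type*} [Ring 𝕜] [AddCommGroup V]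
    [Module 𝕜 V] [TopologicalSpace P] [AddTorsor V P] {s t : Set P} (hst : s ⊆ t)
    (hspan : affineSpan 𝕜 s = affineSpan 𝕜 t) :
    intrinsicInterior 𝕜 s ⊆ intrinsicInterior 𝕜 t := by
  rintro _ ⟨y, hy, rfl⟩
  revert y
  rw [hspan]
  exact fun y hy ↦ ⟨y, interior_mono (preimage_mono hst) hy, rfl⟩

theorem affineSpan_image_homothety {k V P : Type*} [Field k] [AddCommGroup V] [Module k V]
    [AddTorsor V P] {s : Set P} {c : P} (hc : c ∈ affineSpan k s) {r : k} (hr : r ≠ 0) :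
    affineSpan k (homothety c r '' s) = affineSpan k s := by
  rw [← AffineSubspace.map_span, ← AffineSubspace.shift_eq_map_homothety _ _ (IsUnit.mk0 r hr),
    AffineSubspace.shift_eq ⟨c, hc⟩]
  simp

variable {V : Type*} [NormedAddCommGroup V] [NormedSpace ℝ V] [FiniteDimensional ℝ V]
  {s : Set V}

theorem Convex.homothety_mem_intrinsicInterior (hs : Convex ℝ s) {c x : V} (hc : c ∈ s)
    (hx : x ∈ intrinsicInterior ℝ s) {t : ℝ} (ht₀ : 0 < t) (ht₁ : t ≤ 1) :
    homothety c t x ∈ intrinsicInterior ℝ s := by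
  let φ := AffineEquiv.homothetyUnitsMulHom c (Units.mk0 t ht₀.ne')
  have hφ : ⇑φ = homothety c t := AffineEquiv.coe_homothetyUnitsMulHom_apply c _
  have himage : φ '' s ⊆ s := by
    rintro _ ⟨y, hy, rfl⟩
    rw [hφ, homothety_eq_lineMap]
    exact hs.lineMap_mem hc hy ⟨ht₀.le, ht₁⟩
  have hspan : affineSpan ℝ (φ '' s) = affineSpan ℝ s := by
    rw [hφ]
    exact affineSpan_image_homothety (subset_affineSpan ℝ s hc) ht₀.ne'
  refine intrinsicInterior_mono_of_affineSpan_eq himage hspan ?_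
  rw [φ.intrinsicInterior_image, ← hφ]
  exact mem_image_of_mem φ hx

theorem Convex.exists_mem_intrinsicInterior_eq_zero_of_nonpos (hs : Convex ℝ s)
    (g : V →ₗ[ℝ] ℝ) {x q : V} (hx : x ∈ intrinsicInterior ℝ s) (hq : q ∈ s) (hgx : g x ≤ 0)
    (hgq : 0 < g q) : ∃ z ∈ intrinsicInterior ℝ s, g z = 0 := by
  have hden : 0 < g q - g x := by linarith
  refine ⟨homothety q (g q / (g q - g x)) x,
    hs.homothety_mem_intrinsicInterior hq hx (by positivity) ((div_le_one hden).2 (by linarith)),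
    ?_⟩
  rw [homothety_apply, vsub_eq_sub, vadd_eq_add, map_add, map_smul, map_sub, smul_eq_mul]
  field_simp
  ring

theorem Convex.exists_mem_intrinsicInterior_eq_zero (hs : Convex ℝ s) (g : V →ₗ[ℝ] ℝ)
    {p q : V} (hp : p ∈ s) (hq : q ∈ s) (hgp : g p < 0) (hgq : 0 < g q) :
    ∃ z ∈ intrinsicInterior ℝ s, g z = 0 := by
  obtain ⟨x, hx⟩ := (Set.nonempty_of_mem hp).intrinsicInterior hs
  rcases le_or_gt (g x) 0 with hgx | hgx
  · exact hs.exists_mem_intrinsicInterior_eq_zero_of_nonpos g hx hq hgx hgq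
  · obtain ⟨z, hz, hgz⟩ := hs.exists_mem_intrinsicInterior_eq_zero_of_nonpos (-g) hx hp
      (by simpa using hgx.le) (by simpa using hgp)
    exact ⟨z, hz, by simpa using hgz⟩

end IntrinsicInterior

section ProductOfSimplices

variable {X Y : Type*}

def splitFunctional (A : Finset X) (B : Finset Y) : (X ⊕ Y → ℝ) →ₗ[ℝ] ℝ :=
  ∑ i ∈ A, LinearMap.proj (Sum.inl i) - ∑ j ∈ B, LinearMap.proj (Sum.inr j)

theorem splitFunctional_apply (A : Finset X) (B : Finset Y) (f : X ⊕ Y → ℝ) :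
    splitFunctional A B f = ∑ i ∈ A, f (Sum.inl i) - ∑ j ∈ B, f (Sum.inr j) := by
  simp [splitFunctional]

variable [DecidableEq X] [DecidableEq Y]

def simplexProductVertex (x : X) (y : Y) : X ⊕ Y → ℝ :=
  Pi.single (Sum.inl x) 1 + Pi.single (Sum.inr y) 1

theorem splitFunctional_simplexProductVertex (A : Finset X) (B : Finset Y) (x : X) (y : Y) :
    splitFunctional A B (simplexProductVertex x y) =
      (if x ∈ A then 1 else 0) - (if y ∈ B then 1 else 0) := by
  simp [splitFunctional_apply, simplexProductVertex, Pi.single_apply]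

theorem splitFunctional_simplexProductVertex_pos_iff (A : Finset X) (B : Finset Y) (x : X)
    (y : Y) : 0 < splitFunctional A B (simplexProductVertex x y) ↔ x ∈ A ∧ y ∉ B := by
  rw [splitFunctional_simplexProductVertex]
  split_ifs <;> simp_all

theorem splitFunctional_simplexProductVertex_neg_iff (A : Finset X) (B : Finset Y) (x : X)
    (y : Y) : splitFunctional A B (simplexProductVertex x y) < 0 ↔ x ∉ A ∧ y ∈ B := by
  rw [splitFunctional_simplexProductVertex]
  split_ifs <;> simp_all

end ProductOfSimplices

theorem stmt_2_general {X Y : Type*} [Fintype X] [Fintype Y] [DecidableEq X] [DecidableEq Y]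
    (A : Finset X) (B : Finset Y)
    (hA : A.Nonempty) (hA' : A ≠ Finset.univ)
    (hB : B.Nonempty) (hB' : B ≠ Finset.univ) :
    let e : X ⊕ Y → ((X ⊕ Y) → ℝ) := fun z => Pi.single z 1
    let cfg : Set ((X ⊕ Y) → ℝ) :=
      {f | ∃ (x : X) (y : Y), f = e (Sum.inl x) + e (Sum.inr y)}
    let g : ((X ⊕ Y) → ℝ) → ℝ :=
      fun f => (∑ i ∈ A, f (Sum.inl i)) - ∑ j ∈ B, f (Sum.inr j)
    (∃ f ∈ intrinsicInterior ℝ (convexHull ℝ cfg), g f = 0) ∧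
      (∀ (x x' : X) (y y' : Y), (x = x' ∨ y = y') →
        ¬ (0 < g (e (Sum.inl x) + e (Sum.inr y)) ∧
            g (e (Sum.inl x') + e (Sum.inr y')) < 0)) := by
  intro e cfg g
  have hg : ∀ x y, g (e (Sum.inl x) + e (Sum.inr y)) =
      splitFunctional A B (simplexProductVertex x y) := fun x y ↦
    (splitFunctional_apply A B _).symm
  simp only [hg, splitFunctional_simplexProductVertex_pos_iff,
    splitFunctional_simplexProductVertex_neg_iff]
  refine ⟨?_, by rintro x x' y y' (rfl | rfl) <;> tauto⟩
  obtain ⟨x₁, hx₁⟩ := hA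
  obtain ⟨y₁, hy₁⟩ := hB
  obtain ⟨x₀, -, hx₀⟩ := Finset.exists_of_ssubset (Finset.ssubset_univ_iff.2 hA')
  obtain ⟨y₀, -, hy₀⟩ := Finset.exists_of_ssubset (Finset.ssubset_univ_iff.2 hB')
  obtain ⟨f, hf, hgf⟩ := (convex_convexHull ℝ cfg).exists_mem_intrinsicInterior_eq_zero
    (splitFunctional A B) (subset_convexHull ℝ cfg ⟨x₀, y₁, rfl⟩)
    (subset_convexHull ℝ cfg ⟨x₁, y₀, rfl⟩)
    ((splitFunctional_simplexProductVertex_neg_iff A B x₀ y₁).2 ⟨hx₀, hy₁⟩)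
    ((splitFunctional_simplexProductVertex_pos_iff A B x₁ y₀).2 ⟨hx₁, hy₀⟩)
  exact ⟨f, hf, (splitFunctional_apply A B f).symm.trans hgf⟩

/-- Splits of the product of two simplices `B̄(X,Y)`:
for nonempty proper `A ⊊ X`, `B ⊊ Y`, the hyperplane
`∑_{i∈A} f(i) = ∑_{j∈B} f(j)` meets the relative interior of
`conv B̄(X,Y)` and does not separate the endpoints of any edge of the
configuration, i.e. it defines a split of `B̄(X,Y)`. -/
theorem stmt_2 {X Y : Type*} [Fintype X] [Fintype Y] [DecidableEq X] [DecidableEq Y]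
    (hX : 2 ≤ Fintype.card X) (hY : 2 ≤ Fintype.card Y)
    (A : Finset X) (B : Finset Y)
    (hA : A.Nonempty) (hA' : A ≠ Finset.univ)
    (hB : B.Nonempty) (hB' : B ≠ Finset.univ) :
    let e : X ⊕ Y → ((X ⊕ Y) → ℝ) := fun z => Pi.single z 1
    let cfg : Set ((X ⊕ Y) → ℝ) :=
      {f | ∃ (x : X) (y : Y), f = e (Sum.inl x) + e (Sum.inr y)}
    let g : ((X ⊕ Y) → ℝ) → ℝ :=
      fun f => (∑ i ∈ A, f (Sum.inl i)) - ∑ j ∈ B, f (Sum.inr j)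
    (∃ f ∈ intrinsicInterior ℝ (convexHull ℝ cfg), g f = 0) ∧
      (∀ (x x' : X) (y y' : Y), (x = x' ∨ y = y') →
        ¬ (0 < g (e (Sum.inl x) + e (Sum.inr y)) ∧
            g (e (Sum.inl x') + e (Sum.inr y')) < 0)) :=
  stmt_2_general A B hA hA' hB hB'
end

section
/- Let X be a finite set and D : X × X → ℝ any symmetric function. Then there exist a distance d on X (i.e., a symmetric map d : X × X → ℝ with d(x,y) ≥ 0 for all x,y and d(x,x) = 0 for all x) and a vector v : X → ℝ such that T_D = T_d + v, where for a symmetric map E : X × X → ℝ, T_E is the set of minimal elements of P_E = {f : X → ℝ : f(x) + f(y) ≥ E(x,y) for all x, y ∈ X} with respect to the pointwise partial order. -/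
/-!
Translation by `v` is an order isomorphism of `α^X` mapping `P_{E'}` onto `P_E`, where
`E' x y = E x y - v x - v y`, so it maps `T_{E'}` onto `T_E`. With `v x = D x x / 2` the map `D'`
vanishes on the diagonal, which forces every `f ∈ P_{D'}` to be nonnegative; then the negative
values of `D'` impose no constraint, and the distance `d = max D' 0` has the same polyhedron, hence
the same tight span, as `D'`.
-/

open Set

section TightSpan

variable {X α : Type*} [AddCommGroup α] [LinearOrder α] [IsOrderedAddMonoid α]

def polyhedron (E : X → X → α) : Set (X → α) :=
  {f | ∀ x y, E x y ≤ f x + f y}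

def tightSpan (E : X → X → α) : Set (X → α) :=
  {f | Minimal (· ∈ polyhedron E) f}

lemma polyhedron_eq_image_add (E : X → X → α) (v : X → α) :
    polyhedron E = (· + v) '' polyhedron (fun x y => E x y - v x - v y) := by
  rw [image_add_right]
  ext f
  refine forall₂_congr fun x y => ?_
  dsimp only
  rw [Pi.add_apply, Pi.add_apply, Pi.neg_apply, Pi.neg_apply,
    show f x + -v x + (f y + -v y) = f x + f y - v x - v y by abel,
    sub_le_sub_iff_right, sub_le_sub_iff_right]

lemma tightSpan_eq_image_add (E : X → X → α) (v : X → α) :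
    tightSpan E = (· + v) '' tightSpan (fun x y => E x y - v x - v y) := by
  rw [tightSpan, tightSpan, polyhedron_eq_image_add E v]
  exact ((OrderIso.addRight v).toOrderEmbedding.image_setOfPred_minimal).symm

lemma nonneg_of_mem_polyhedron {E : X → X → α} (hE : ∀ x, 0 ≤ E x x) {f : X → α}
    (hf : f ∈ polyhedron E) (x : X) : 0 ≤ f x := by
  by_contra! h
  exact (hE x).not_gt ((hf x x).trans_lt (add_neg h h))

lemma polyhedron_max_zero {E : X → X → α} (hE : ∀ x, 0 ≤ E x x) :
    polyhedron (fun x y => max (E x y) 0) = polyhedron E := by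
  ext f
  refine ⟨fun hf x y => (le_max_left _ _).trans (hf x y), fun hf x y => max_le (hf x y) ?_⟩
  exact add_nonneg (nonneg_of_mem_polyhedron hE hf x) (nonneg_of_mem_polyhedron hE hf y)

end TightSpan

theorem stmt_7_general {X : Type*} (D : X → X → ℝ)
    (hsym : ∀ x y, D x y = D y x) :
    let P : (X → X → ℝ) → Set (X → ℝ) :=
      fun E => {f | ∀ x y, E x y ≤ f x + f y}
    let T : (X → X → ℝ) → Set (X → ℝ) :=
      fun E => {f | f ∈ P E ∧ ∀ g ∈ P E, g ≤ f → g = f}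
    ∃ (d : X → X → ℝ) (v : X → ℝ),
      (∀ x y, d x y = d y x) ∧ (∀ x y, 0 ≤ d x y) ∧ (∀ x, d x x = 0) ∧
        T D = (fun f => f + v) '' T d := by
  intro P T
  have hT : ∀ E, T E = tightSpan E := fun E => ext fun f =>
    (and_congr_right fun _ => forall₂_congr fun _ _ => imp_congr_right fun _ => eq_comm).trans
      minimal_iff.symm
  set v : X → ℝ := fun x => D x x / 2
  set D' : X → X → ℝ := fun x y => D x y - v x - v y
  have hD' : ∀ x, D' x x = 0 := fun x => by simp only [D', v]; ring
  refine ⟨fun x y => max (D' x y) 0, v, fun x y => ?_, fun x y => le_max_right _ _,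
    fun x => by simp only [hD', max_self], ?_⟩
  · simp only [D', hsym x y]
    ring_nf
  · rw [hT, hT, tightSpan_eq_image_add D v, tightSpan, tightSpan,
      polyhedron_max_zero fun x => (hD' x).ge]

/-- Corollary 4.4: for every symmetric map `D : X × X → ℝ` there exist a
distance `d` on `X` and a vector `v ∈ ℝ^X` such that `T_D = T_d + v`. -/
theorem stmt_7 {X : Type*} [Fintype X] (D : X → X → ℝ)
    (hsym : ∀ x y, D x y = D y x) :
    let P : (X → X → ℝ) → Set (X → ℝ) :=
      fun E => {f | ∀ x y, E x y ≤ f x + f y}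
    let T : (X → X → ℝ) → Set (X → ℝ) :=
      fun E => {f | f ∈ P E ∧ ∀ g ∈ P E, g ≤ f → g = f}
    ∃ (d : X → X → ℝ) (v : X → ℝ),
      (∀ x y, d x y = d y x) ∧ (∀ x y, 0 ≤ d x y) ∧ (∀ x, d x x = 0) ∧
        T D = (fun f => f + v) '' T d :=
  stmt_7_general D hsym
end

section
/- Let Y be a finite set and D a symmetric map assigning a real number to each pair of nonempty subsets of Y, satisfying (A1) D(A,B) + D(B,C) ≥ D(A,C) for all nonempty A, B, C ⊆ Y, (A2) D({x},{x}) = 0 for all x ∈ Y, and (A3) D(A,B) = ½ D(A∪B, A∪B) for all nonempty A ≠ B. Define δ(D) : 𝒫(Y) → ℝ by δ(D)(A) = ½ D(A,A) for nonempty A and δ(D)(∅) = 0. Then δ(D) is a diversity on Y, i.e., δ(D)(A∪B) + δ(D)(B∪C) ≥ δ(D)(A∪C) for all A, C ⊆ Y and nonempty B ⊆ Y, and δ(D)(A) = 0 whenever |A| ≤ 1. -/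
/-!
Write `δ` for `δ(D)`. Condition (A3) makes `D X Z` equal to `δ (X ∪ Z)` whenever `X ≠ Z`, so
the triangle inequality (A1) through a set turns into inequalities between values of `δ`:
through `X` itself it gives `δ ≥ 0`, through a superset `Z` it gives monotonicity, and through
a common nonempty subset `B` of `P` and `Q` it gives `δ (P ∪ Q) ≤ δ P + δ Q`. Applied to
`P = A ∪ B`, `Q = B ∪ C`, together with monotonicity, this is (D1).
-/

namespace DiagDiversity

variable {Y : Type*}

def TriangleOnNonempty (D : Finset Y → Finset Y → ℝ) : Prop :=
  ∀ A B C : Finset Y, A.Nonempty → B.Nonempty → C.Nonempty → D A C ≤ D A B + D B C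

theorem TriangleOnNonempty.diag_nonneg {D : Finset Y → Finset Y → ℝ}
    (hA1 : TriangleOnNonempty D) {A : Finset Y} (hA : A.Nonempty) : 0 ≤ D A A := by
  linarith [hA1 A A A hA hA hA]

variable [DecidableEq Y]

def HalfDiagOfUnion (D : Finset Y → Finset Y → ℝ) : Prop :=
  ∀ A B : Finset Y, A.Nonempty → B.Nonempty → A ≠ B → D A B = D (A ∪ B) (A ∪ B) / 2

noncomputable def diagDiversity (D : Finset Y → Finset Y → ℝ) (A : Finset Y) : ℝ :=
  if A = ∅ then 0 else D A A / 2

variable {D : Finset Y → Finset Y → ℝ}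

namespace HalfDiagOfUnion

variable (hA3 : HalfDiagOfUnion D) {X Z : Finset Y} (hX : X.Nonempty) (hXZ : X ⊆ Z)
  (hne : X ≠ Z)
include hA3 hX hXZ hne

theorem apply_of_subset : D X Z = D Z Z / 2 := by
  rw [hA3 X Z hX (hX.mono hXZ) hne, Finset.union_eq_right.mpr hXZ]

theorem apply_of_superset : D Z X = D Z Z / 2 := by
  rw [hA3 Z X (hX.mono hXZ) hX hne.symm, Finset.union_eq_left.mpr hXZ]

end HalfDiagOfUnion

theorem diagDiversity_of_nonempty {A : Finset Y} (hA : A.Nonempty) :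
    diagDiversity D A = D A A / 2 :=
  if_neg hA.ne_empty

theorem diagDiversity_nonneg (hA1 : TriangleOnNonempty D) (A : Finset Y) :
    0 ≤ diagDiversity D A := by
  rcases A.eq_empty_or_nonempty with rfl | hA
  · simp [diagDiversity]
  · rw [diagDiversity_of_nonempty hA]
    linarith [hA1.diag_nonneg hA]

theorem diagDiversity_eq_zero_of_card_le_one (hA2 : ∀ x : Y, D {x} {x} = 0) {A : Finset Y}
    (hA : A.card ≤ 1) : diagDiversity D A = 0 := by
  rcases Nat.le_one_iff_eq_zero_or_eq_one.mp hA with h | h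
  · simp [diagDiversity, Finset.card_eq_zero.mp h]
  · obtain ⟨x, rfl⟩ := Finset.card_eq_one.mp h
    simp [diagDiversity, hA2 x]

theorem diagDiversity_mono (hA1 : TriangleOnNonempty D) (hA3 : HalfDiagOfUnion D)
    {X Z : Finset Y} (hXZ : X ⊆ Z) : diagDiversity D X ≤ diagDiversity D Z := by
  rcases X.eq_empty_or_nonempty with rfl | hX
  · simpa [diagDiversity] using diagDiversity_nonneg hA1 Z
  rcases eq_or_ne X Z with rfl | hne
  · rfl
  rw [diagDiversity_of_nonempty hX, diagDiversity_of_nonempty (hX.mono hXZ)]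
  linarith [hA1 X Z X hX (hX.mono hXZ) hX, hA3.apply_of_subset hX hXZ hne,
    hA3.apply_of_superset hX hXZ hne]

theorem diagDiversity_union_le (hA1 : TriangleOnNonempty D) (hA3 : HalfDiagOfUnion D)
    {B P Q : Finset Y} (hB : B.Nonempty) (hBP : B ⊆ P) (hBQ : B ⊆ Q) :
    diagDiversity D (P ∪ Q) ≤ diagDiversity D P + diagDiversity D Q := by
  rcases eq_or_ne B P with rfl | hBP'
  · rw [Finset.union_eq_right.mpr hBQ]
    linarith [diagDiversity_nonneg hA1 B]
  rcases eq_or_ne B Q with rfl | hBQ'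
  · rw [Finset.union_eq_left.mpr hBP]
    linarith [diagDiversity_nonneg hA1 B]
  have hP := hB.mono hBP
  have hQ := hB.mono hBQ
  rw [diagDiversity_of_nonempty (hP.mono Finset.subset_union_left),
    diagDiversity_of_nonempty hP, diagDiversity_of_nonempty hQ]
  have hPQ : D (P ∪ Q) (P ∪ Q) / 2 ≤ D P Q := by
    rcases eq_or_ne P Q with rfl | hne
    · rw [Finset.union_self]
      linarith [hA1.diag_nonneg hP]
    · exact (hA3 P Q hP hQ hne).ge
  linarith [hA1 P B Q hP hB hQ, hA3.apply_of_superset hB hBP hBP',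
    hA3.apply_of_subset hB hBQ hBQ']

theorem diagDiversity_triangle (hA1 : TriangleOnNonempty D) (hA3 : HalfDiagOfUnion D)
    (A C : Finset Y) {B : Finset Y} (hB : B.Nonempty) :
    diagDiversity D (A ∪ C) ≤ diagDiversity D (A ∪ B) + diagDiversity D (B ∪ C) := calc
  diagDiversity D (A ∪ C) ≤ diagDiversity D ((A ∪ B) ∪ (B ∪ C)) :=
    diagDiversity_mono hA1 hA3 (Finset.union_subset_union Finset.subset_union_left
      Finset.subset_union_right)
  _ ≤ diagDiversity D (A ∪ B) + diagDiversity D (B ∪ C) :=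
    diagDiversity_union_le hA1 hA3 hB Finset.subset_union_right Finset.subset_union_left

end DiagDiversity

open DiagDiversity in
theorem stmt_11_general {Y : Type*} [DecidableEq Y]
    (D : Finset Y → Finset Y → ℝ)
    (hA1 : ∀ A B C : Finset Y, A.Nonempty → B.Nonempty → C.Nonempty →
      D A C ≤ D A B + D B C)
    (hA2 : ∀ x : Y, D {x} {x} = 0)
    (hA3 : ∀ A B : Finset Y, A.Nonempty → B.Nonempty → A ≠ B →
      D A B = D (A ∪ B) (A ∪ B) / 2) :
    let δD : Finset Y → ℝ := fun A => if A = ∅ then 0 else D A A / 2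
    (∀ A C B : Finset Y, B.Nonempty → δD (A ∪ C) ≤ δD (A ∪ B) + δD (B ∪ C)) ∧
      (∀ A : Finset Y, A.card ≤ 1 → δD A = 0) :=
  ⟨fun A C _ hB => diagDiversity_triangle hA1 hA3 A C hB,
    fun _ hA => diagDiversity_eq_zero_of_card_le_one hA2 hA⟩

/-- Proposition 6.2(b): if `D` is a symmetric map on pairs of nonempty subsets
of `Y` satisfying (A1)--(A3), then `δ(D)` is a diversity on `Y`. -/
theorem stmt_11 {Y : Type*} [Fintype Y] [DecidableEq Y]
    (D : Finset Y → Finset Y → ℝ)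
    (hsym : ∀ A B : Finset Y, A.Nonempty → B.Nonempty → D A B = D B A)
    (hA1 : ∀ A B C : Finset Y, A.Nonempty → B.Nonempty → C.Nonempty →
      D A C ≤ D A B + D B C)
    (hA2 : ∀ x : Y, D {x} {x} = 0)
    (hA3 : ∀ A B : Finset Y, A.Nonempty → B.Nonempty → A ≠ B →
      D A B = D (A ∪ B) (A ∪ B) / 2) :
    let δD : Finset Y → ℝ := fun A => if A = ∅ then 0 else D A A / 2
    (∀ A C B : Finset Y, B.Nonempty → δD (A ∪ C) ≤ δD (A ∪ B) + δD (B ∪ C)) ∧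
      (∀ A : Finset Y, A.card ≤ 1 → δD A = 0) :=
  stmt_11_general D hA1 hA2 hA3
end

section
/- Let Y be a finite set. The map δ ↦ D_δ, where D_δ(A,B) = 2δ(A) if A = B and D_δ(A,B) = δ(A∪B) if A ≠ B (for nonempty A, B ⊆ Y), is a bijection from the set of diversities on Y onto the set of symmetric maps D on pairs of nonempty subsets of Y satisfying (A1) D(A,B) + D(B,C) ≥ D(A,C) for all nonempty A, B, C ⊆ Y, (A2) D({x},{x}) = 0 for all x ∈ Y, and (A3) D(A,B) = ½ D(A∪B, A∪B) for all nonempty A ≠ B. -/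
/-!
A diversity is nonnegative ((D1) with `B = A`) and monotone ((D1) with `B = {a}` and `C = ∅` gives
`δ A ≤ δ (insert a A)`), so `D_δ(A, B) ≥ δ(A ∪ B)` and (A1) for `D_δ` follows from (D1), and from
monotonicity when `A = C`. The inverse map is `D ↦ (A ↦ D(A, A) / 2)`, and (A3) says exactly that
`D` is recovered from it. Conversely (A1) gives back monotonicity (at `A, A ∪ B, A`) and
`δ (A ∪ B ∪ C) ≤ δ (A ∪ B) + δ (B ∪ C)` (at `A ∪ B, B, B ∪ C`), which together yield (D1).
-/
section

open Finset

variable {Y : Type*}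

abbrev NonemptyFinset (Y : Type*) := {A : Finset Y // A.Nonempty}

noncomputable def halfDiagonal (D : NonemptyFinset Y → NonemptyFinset Y → ℝ) (A : Finset Y) : ℝ :=
  if h : A.Nonempty then D ⟨A, h⟩ ⟨A, h⟩ / 2 else 0

theorem halfDiagonal_coe (D : NonemptyFinset Y → NonemptyFinset Y → ℝ) (A : NonemptyFinset Y) :
    halfDiagonal D A.1 = D A A / 2 :=
  dif_pos A.2

variable [DecidableEq Y]

def IsDiversity (δ : Finset Y → ℝ) : Prop :=
  (∀ A C B : Finset Y, B.Nonempty → δ (A ∪ C) ≤ δ (A ∪ B) + δ (B ∪ C)) ∧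
    ∀ A : Finset Y, A.card ≤ 1 → δ A = 0

/-- The conditions of symmetry and (A1)–(A3) on a map `D` on pairs of nonempty subsets. -/
def IsDiversityPairing (D : NonemptyFinset Y → NonemptyFinset Y → ℝ) : Prop :=
  (∀ A B, D A B = D B A) ∧ (∀ A B C, D A C ≤ D A B + D B C) ∧
    (∀ x : Y, D ⟨{x}, singleton_nonempty x⟩ ⟨{x}, singleton_nonempty x⟩ = 0) ∧
    ∀ A B, A ≠ B → D A B = D ⟨A.1 ∪ B.1, A.2.inl⟩ ⟨A.1 ∪ B.1, A.2.inl⟩ / 2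

/-- The map `D_δ`. -/
def pairing (δ : Finset Y → ℝ) (A B : NonemptyFinset Y) : ℝ :=
  if A = B then 2 * δ A.1 else δ (A.1 ∪ B.1)

section pairing

variable {δ : Finset Y → ℝ}

theorem pairing_self (δ : Finset Y → ℝ) (A : NonemptyFinset Y) : pairing δ A A = 2 * δ A.1 :=
  if_pos rfl

theorem pairing_of_ne {A B : NonemptyFinset Y} (h : A ≠ B) : pairing δ A B = δ (A.1 ∪ B.1) :=
  if_neg h

theorem pairing_comm (δ : Finset Y → ℝ) (A B : NonemptyFinset Y) :
    pairing δ A B = pairing δ B A := by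
  rcases eq_or_ne A B with rfl | h
  · rfl
  · rw [pairing_of_ne h, pairing_of_ne h.symm, union_comm]

theorem halfDiagonal_pairing (h₀ : δ ∅ = 0) : halfDiagonal (pairing δ) = δ := by
  funext A
  rcases A.eq_empty_or_nonempty with rfl | hA
  · exact (dif_neg Finset.not_nonempty_empty).trans h₀.symm
  · rw [halfDiagonal_coe _ ⟨A, hA⟩, pairing_self]
    ring

theorem pairing_halfDiagonal {D : NonemptyFinset Y → NonemptyFinset Y → ℝ}
    (hD : ∀ A B, A ≠ B → D A B = D ⟨A.1 ∪ B.1, A.2.inl⟩ ⟨A.1 ∪ B.1, A.2.inl⟩ / 2) :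
    pairing (halfDiagonal D) = D := by
  funext A B
  rcases eq_or_ne A B with rfl | h
  · rw [pairing_self, halfDiagonal_coe]
    ring
  · rw [pairing_of_ne h, hD A B h, halfDiagonal_coe _ ⟨A.1 ∪ B.1, A.2.inl⟩]

end pairing

namespace IsDiversity

variable {δ : Finset Y → ℝ} (hδ : IsDiversity δ)
include hδ

theorem empty : δ ∅ = 0 :=
  hδ.2 ∅ (by simp)

theorem nonneg (A : Finset Y) : 0 ≤ δ A := by
  rcases A.eq_empty_or_nonempty with rfl | hA
  · exact hδ.empty.ge
  · have := hδ.1 A A A hA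
    simp only [union_self] at this
    linarith

theorem monotone : Monotone δ := by
  refine monotone_iff_forall_le_insert.2 fun A a _ => ?_
  have := hδ.1 A ∅ {a} (singleton_nonempty a)
  rwa [union_empty, union_empty, hδ.2 {a} (card_singleton a).le, add_zero,
    union_singleton] at this

theorem le_pairing (A B : NonemptyFinset Y) : δ (A.1 ∪ B.1) ≤ pairing δ A B := by
  rcases eq_or_ne A B with rfl | h
  · rw [pairing_self, union_self]
    linarith [hδ.nonneg A.1]
  · rw [pairing_of_ne h]

theorem pairing_triangle (A B C : NonemptyFinset Y) :
    pairing δ A C ≤ pairing δ A B + pairing δ B C := by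
  rcases eq_or_ne A C with rfl | h
  · have hA : δ A.1 ≤ δ (A.1 ∪ B.1) := hδ.monotone subset_union_left
    have hA' : δ A.1 ≤ δ (B.1 ∪ A.1) := hδ.monotone subset_union_right
    linarith [pairing_self δ A, hδ.le_pairing A B, hδ.le_pairing B A]
  · rw [pairing_of_ne h]
    linarith [hδ.1 A.1 C.1 B.1 B.2, hδ.le_pairing A B, hδ.le_pairing B C]

theorem isDiversityPairing_pairing : IsDiversityPairing (pairing δ) := by
  refine ⟨pairing_comm δ, hδ.pairing_triangle, fun x => ?_, fun A B h => ?_⟩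
  · rw [pairing_self, hδ.2 {x} (card_singleton x).le, mul_zero]
  · rw [pairing_of_ne h, pairing_self]
    ring

end IsDiversity

section triangle

variable {δ : Finset Y → ℝ} (h₀ : δ ∅ = 0)
  (hT : ∀ A B C : NonemptyFinset Y, pairing δ A C ≤ pairing δ A B + pairing δ B C)
include h₀ hT

theorem nonneg_of_pairing_triangle (A : Finset Y) : 0 ≤ δ A := by
  rcases A.eq_empty_or_nonempty with rfl | hA
  · exact h₀.ge
  · linarith [hT ⟨A, hA⟩ ⟨A, hA⟩ ⟨A, hA⟩, pairing_self δ ⟨A, hA⟩]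

theorem monotone_of_pairing_triangle : Monotone δ := by
  intro A B hAB
  rcases A.eq_empty_or_nonempty with rfl | hA
  · exact h₀.trans_le (nonneg_of_pairing_triangle h₀ hT B)
  rcases eq_or_ne A B with rfl | hne
  · exact le_rfl
  have h : (⟨A, hA⟩ : NonemptyFinset Y) ≠ ⟨B, hA.mono hAB⟩ := fun e => hne (congrArg Subtype.val e)
  have := hT ⟨A, hA⟩ ⟨B, hA.mono hAB⟩ ⟨A, hA⟩
  rw [pairing_self, pairing_of_ne h, pairing_of_ne h.symm, union_comm B A,
    union_eq_right.mpr hAB] at this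
  linarith

theorem union_le_of_pairing_triangle {Q R B : NonemptyFinset Y} (hQ : B.1 ⊆ Q.1)
    (hR : B.1 ⊆ R.1) : δ (Q.1 ∪ R.1) ≤ δ Q.1 + δ R.1 := by
  have hδ := nonneg_of_pairing_triangle h₀ hT
  rcases eq_or_ne Q B with rfl | hQB
  · rw [union_eq_right.mpr hR]
    linarith [hδ Q.1]
  rcases eq_or_ne B R with rfl | hBR
  · rw [union_eq_left.mpr hQ]
    linarith [hδ B.1]
  rcases eq_or_ne Q R with rfl | hQR
  · rw [union_self]
    linarith [hδ Q.1]
  have := hT Q B R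
  rwa [pairing_of_ne hQR, pairing_of_ne hQB, pairing_of_ne hBR, union_eq_left.mpr hQ,
    union_eq_right.mpr hR] at this

theorem diversity_triangle_of_pairing_triangle (A C B : Finset Y) (hB : B.Nonempty) :
    δ (A ∪ C) ≤ δ (A ∪ B) + δ (B ∪ C) :=
  calc δ (A ∪ C) ≤ δ ((A ∪ B) ∪ (B ∪ C)) :=
        monotone_of_pairing_triangle h₀ hT (union_subset_union subset_union_left subset_union_right)
    _ ≤ δ (A ∪ B) + δ (B ∪ C) :=
        union_le_of_pairing_triangle (B := ⟨B, hB⟩) (Q := ⟨A ∪ B, hB.mono subset_union_right⟩)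
          (R := ⟨B ∪ C, hB.mono subset_union_left⟩) h₀ hT subset_union_right subset_union_left

end triangle

theorem IsDiversityPairing.isDiversity_halfDiagonal
    {D : NonemptyFinset Y → NonemptyFinset Y → ℝ} (hD : IsDiversityPairing D) :
    IsDiversity (halfDiagonal D) := by
  obtain ⟨-, hT, hsing, hunion⟩ := hD
  have h₀ : halfDiagonal D ∅ = 0 := dif_neg Finset.not_nonempty_empty
  rw [← pairing_halfDiagonal hunion] at hT
  refine ⟨diversity_triangle_of_pairing_triangle h₀ hT, fun A hA => ?_⟩
  rcases A.eq_empty_or_nonempty with rfl | hne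
  · exact h₀
  · obtain ⟨x, rfl⟩ := card_eq_one.mp (hA.antisymm hne.card_pos)
    rw [halfDiagonal_coe D ⟨{x}, singleton_nonempty x⟩, hsing x, zero_div]

end

theorem stmt_13_general {Y : Type*} [DecidableEq Y] :
    let NE := {A : Finset Y // A.Nonempty}
    let un : NE → NE → NE := fun A B => ⟨A.1 ∪ B.1, A.2.inl⟩
    let Div : Set (Finset Y → ℝ) :=
      {δ | (∀ A C B : Finset Y, B.Nonempty → δ (A ∪ C) ≤ δ (A ∪ B) + δ (B ∪ C)) ∧
        ∀ A : Finset Y, A.card ≤ 1 → δ A = 0}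
    let Good : Set (NE → NE → ℝ) :=
      {D | (∀ A B, D A B = D B A) ∧
        (∀ A B C, D A C ≤ D A B + D B C) ∧
        (∀ x : Y, D ⟨{x}, Finset.singleton_nonempty x⟩
            ⟨{x}, Finset.singleton_nonempty x⟩ = 0) ∧
        (∀ A B, A ≠ B → D A B = D (un A B) (un A B) / 2)}
    let F : (Finset Y → ℝ) → NE → NE → ℝ :=
      fun δ A B => if A = B then 2 * δ A.1 else δ (A.1 ∪ B.1)
    Set.BijOn F Div Good :=
  Set.InvOn.bijOn (f' := halfDiagonal)
    ⟨fun _ hδ => halfDiagonal_pairing (IsDiversity.empty hδ),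
      fun _ hD => pairing_halfDiagonal hD.2.2.2⟩
    (fun _ hδ => IsDiversity.isDiversityPairing_pairing hδ)
    (fun _ hD => IsDiversityPairing.isDiversity_halfDiagonal hD)

/-- Corollary 6.3: `δ ↦ D_δ` is a bijection from the set of diversities on `Y`
onto the set of symmetric maps on pairs of nonempty subsets of `Y`
satisfying (A1)--(A3). -/
theorem stmt_13 {Y : Type*} [Fintype Y] [DecidableEq Y] :
    let NE := {A : Finset Y // A.Nonempty}
    let un : NE → NE → NE := fun A B => ⟨A.1 ∪ B.1, A.2.inl⟩
    let Div : Set (Finset Y → ℝ) :=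
      {δ | (∀ A C B : Finset Y, B.Nonempty → δ (A ∪ C) ≤ δ (A ∪ B) + δ (B ∪ C)) ∧
        ∀ A : Finset Y, A.card ≤ 1 → δ A = 0}
    let Good : Set (NE → NE → ℝ) :=
      {D | (∀ A B, D A B = D B A) ∧
        (∀ A B C, D A C ≤ D A B + D B C) ∧
        (∀ x : Y, D ⟨{x}, Finset.singleton_nonempty x⟩
            ⟨{x}, Finset.singleton_nonempty x⟩ = 0) ∧
        (∀ A B, A ≠ B → D A B = D (un A B) (un A B) / 2)}
    let F : (Finset Y → ℝ) → NE → NE → ℝ :=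
      fun δ A B => if A = B then 2 * δ A.1 else δ (A.1 ∪ B.1)
    Set.BijOn F Div Good :=
  stmt_13_general
end

section
/- Let Y be a finite set. The map δ ↦ d_δ from diversities on Y to distances on the set of nonempty subsets of Y is injective: if δ and δ' are diversities on Y with d_δ(A,B) = d_{δ'}(A,B) for all nonempty A, B ⊆ Y, then δ = δ'. Here d_δ(A,A) = 0 and d_δ(A,B) = max(0, δ(A∪B) − δ(A) − δ(B)) for nonempty A ≠ B. -/
/-!
For `|A| ≥ 2` and `a ∈ A`, the diversity splits as `δ A = d_δ({a}, A \ {a}) + δ (A \ {a})`: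
monotonicity of `δ` makes the truncation `max 0` in `d_δ` inactive, and `δ {a} = 0`.
Hence `δ` is recovered from `d_δ` by induction on `A`, starting from `δ = 0` on sets of size
at most one.
-/

namespace Diversity

variable {Y : Type*} [DecidableEq Y] {δ : Finset Y → ℝ}

def dist (δ : Finset Y → ℝ) (A B : Finset Y) : ℝ :=
  if A = B then 0 else max 0 (δ (A ∪ B) - δ A - δ B)

theorem le_insert
    (hδ1 : ∀ A C B : Finset Y, B.Nonempty → δ (A ∪ C) ≤ δ (A ∪ B) + δ (B ∪ C))
    (hδ2 : ∀ A : Finset Y, A.card ≤ 1 → δ A = 0) (A : Finset Y) (b : Y) :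
    δ A ≤ δ (insert b A) := by
  have h := hδ1 A ∅ {b} (Finset.singleton_nonempty b)
  rw [Finset.union_empty, Finset.union_empty, hδ2 {b} (Finset.card_singleton b).le,
    Finset.union_comm, ← Finset.insert_eq] at h
  linarith

theorem monotone
    (hδ1 : ∀ A C B : Finset Y, B.Nonempty → δ (A ∪ C) ≤ δ (A ∪ B) + δ (B ∪ C))
    (hδ2 : ∀ A : Finset Y, A.card ≤ 1 → δ A = 0) :
    Monotone δ := by
  intro A B hAB
  have grow : ∀ S : Finset Y, δ A ≤ δ (S ∪ A) := by
    intro S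
    induction S using Finset.induction_on with
    | empty => rw [Finset.empty_union]
    | insert b S _ ih =>
      rw [Finset.insert_union]
      exact ih.trans (le_insert hδ1 hδ2 _ b)
  simpa [Finset.union_eq_left.mpr hAB] using grow B

theorem dist_singleton_of_notMem (hmono : Monotone δ) {a : Y} (ha0 : δ {a} = 0)
    {s : Finset Y} (ha : a ∉ s) :
    dist δ {a} s = δ (insert a s) - δ s := by
  have hne : ({a} : Finset Y) ≠ s := fun h => ha (h ▸ Finset.mem_singleton_self a)
  have hle : δ s ≤ δ (insert a s) := hmono (Finset.subset_insert a s)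
  rw [dist, if_neg hne, ← Finset.insert_eq, ha0, sub_zero, max_eq_right (sub_nonneg.mpr hle)]

end Diversity

theorem stmt_14_general {Y : Type*} [DecidableEq Y] (δ δ' : Finset Y → ℝ)
    (hδ1 : ∀ A C B : Finset Y, B.Nonempty → δ (A ∪ C) ≤ δ (A ∪ B) + δ (B ∪ C))
    (hδ2 : ∀ A : Finset Y, A.card ≤ 1 → δ A = 0)
    (hδ'1 : ∀ A C B : Finset Y, B.Nonempty → δ' (A ∪ C) ≤ δ' (A ∪ B) + δ' (B ∪ C))
    (hδ'2 : ∀ A : Finset Y, A.card ≤ 1 → δ' A = 0)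
    (d d' : Finset Y → Finset Y → ℝ)
    (hd : ∀ A B : Finset Y,
      d A B = if A = B then 0 else max 0 (δ (A ∪ B) - δ A - δ B))
    (hd' : ∀ A B : Finset Y,
      d' A B = if A = B then 0 else max 0 (δ' (A ∪ B) - δ' A - δ' B))
    (h : ∀ A B : Finset Y, A.Nonempty → B.Nonempty → d A B = d' A B) :
    δ = δ' := by
  obtain rfl : d = Diversity.dist δ := funext fun A => funext (hd A)
  obtain rfl : d' = Diversity.dist δ' := funext fun A => funext (hd' A)
  have hmono := Diversity.monotone hδ1 hδ2
  have hmono' := Diversity.monotone hδ'1 hδ'2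
  funext A
  induction A using Finset.induction_on with
  | empty => rw [hδ2 ∅ (by simp), hδ'2 ∅ (by simp)]
  | insert a s ha ih =>
    rcases s.eq_empty_or_nonempty with rfl | hs
    · have hcard : (insert a ∅ : Finset Y).card ≤ 1 := by simp
      rw [hδ2 _ hcard, hδ'2 _ hcard]
    · have hsplit := h {a} s (Finset.singleton_nonempty a) hs
      rw [Diversity.dist_singleton_of_notMem hmono (hδ2 _ (by simp)) ha,
        Diversity.dist_singleton_of_notMem hmono' (hδ'2 _ (by simp)) ha, ih] at hsplit
      linarith

/-- Lemma 6.4: the map `δ ↦ d_δ` from diversities on `Y` to distances on the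
nonempty subsets of `Y` is injective. -/
theorem stmt_14 {Y : Type*} [Fintype Y] [DecidableEq Y] (δ δ' : Finset Y → ℝ)
    (hδ1 : ∀ A C B : Finset Y, B.Nonempty → δ (A ∪ C) ≤ δ (A ∪ B) + δ (B ∪ C))
    (hδ2 : ∀ A : Finset Y, A.card ≤ 1 → δ A = 0)
    (hδ'1 : ∀ A C B : Finset Y, B.Nonempty → δ' (A ∪ C) ≤ δ' (A ∪ B) + δ' (B ∪ C))
    (hδ'2 : ∀ A : Finset Y, A.card ≤ 1 → δ' A = 0)
    (d d' : Finset Y → Finset Y → ℝ)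
    (hd : ∀ A B : Finset Y,
      d A B = if A = B then 0 else max 0 (δ (A ∪ B) - δ A - δ B))
    (hd' : ∀ A B : Finset Y,
      d' A B = if A = B then 0 else max 0 (δ' (A ∪ B) - δ' A - δ' B))
    (h : ∀ A B : Finset Y, A.Nonempty → B.Nonempty → d A B = d' A B) :
    δ = δ' :=
  stmt_14_general δ δ' hδ1 hδ2 hδ'1 hδ'2 d d' hd hd' h
end

section
/- Let Y be a finite set, 𝒮 a finite set of splits of Y (a split is an unordered pair {C,D} of nonempty disjoint subsets of Y with C ∪ D = Y), and α : 𝒮 → ℝ with α(S) > 0 for all S ∈ 𝒮. Let δ = δ_{(𝒮,α)} be the split system diversity, defined on A ⊆ Y by δ(A) = ∑ over those S ∈ 𝒮 that split A of α(S), where S = {C,D} splits A iff A ∩ C ≠ ∅ and A ∩ D ≠ ∅. Then P(δ) = P⁻(δ), where P(δ) = {f : 𝒫(Y) → ℝ : f(∅) = 0 and ∑_{A∈𝒜} f(A) ≥ δ(⋃𝒜) for every family 𝒜 ⊆ 𝒫(Y)} and P⁻(δ) = {f : 𝒫(Y) → ℝ : f(∅) = 0 and f(A) + f(B) ≥ δ(A∪B)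 for all A, B ⊆ Y}. Consequently the sets of minimal elements (the tight-spans) of the two polyhedra coincide. -/
/-!
Only `P⁻(δ) ⊆ P(δ)` needs work. Given a family `ℬ` of `n ≥ 2` nonempty sets with union `U`,
every split `S` that splits `U` splits `A ∪ B` for at least `2(n - 1)` ordered pairs `A ≠ B`
of `ℬ`: either some member of `ℬ` is itself split by `S`, and it pairs with all others, or the
`p` members meeting one side and the `q` members meeting the other give `2pq ≥ 2(p + q - 1)`
pairs. Summing with the weights `α`,
`2(n - 1) δ(U) ≤ ∑_{A ≠ B} δ(A ∪ B) ≤ ∑_{A ≠ B} (f A + f B) = 2(n - 1) ∑_{A ∈ ℬ} f A`.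
-/

open Finset

namespace SplitDiversity

variable {Y : Type*} [DecidableEq Y]

section PairAverage

variable {δ f : Finset Y → ℝ}

theorem union_le_add_of_sup_le_sum (hδ : ∀ A, 0 ≤ δ A)
    (hf : ∀ 𝒜 : Finset (Finset Y), δ (𝒜.sup id) ≤ ∑ A ∈ 𝒜, f A) (A B : Finset Y) :
    δ (A ∪ B) ≤ f A + f B := by
  by_cases hAB : A = B
  · subst hAB
    have hA : δ A ≤ f A := by simpa using hf {A}
    rw [union_self]
    linarith [hδ A]
  · simpa [sum_pair hAB] using hf {A, B}

theorem sum_sum_erase_add (ℬ : Finset (Finset Y)) :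
    ∑ A ∈ ℬ, ∑ B ∈ ℬ.erase A, (f A + f B) = ((2 * (#ℬ - 1) : ℕ) : ℝ) * ∑ A ∈ ℬ, f A := by
  calc ∑ A ∈ ℬ, ∑ B ∈ ℬ.erase A, (f A + f B)
      = ∑ A ∈ ℬ, ((#ℬ - 1 : ℕ) * f A + (∑ B ∈ ℬ, f B - f A)) :=
        sum_congr rfl fun A hA => by
          rw [sum_add_distrib, sum_const, card_erase_of_mem hA, sum_erase_eq_sub hA, nsmul_eq_mul]
    _ = _ := by
        obtain rfl | hℬ := ℬ.eq_empty_or_nonempty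
        · simp
        rw [sum_add_distrib, sum_sub_distrib, sum_const, ← mul_sum, nsmul_eq_mul]
        push_cast [Nat.cast_sub hℬ.card_pos]
        ring

theorem sup_le_sum_of_le_pair_average (hf : ∀ A B, δ (A ∪ B) ≤ f A + f B)
    {ℬ : Finset (Finset Y)} (hn : 2 ≤ #ℬ)
    (havg : ((2 * (#ℬ - 1) : ℕ) : ℝ) * δ (ℬ.sup id) ≤
      ∑ A ∈ ℬ, ∑ B ∈ ℬ.erase A, δ (A ∪ B)) :
    δ (ℬ.sup id) ≤ ∑ A ∈ ℬ, f A := by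
  have hpos : (0 : ℝ) < ((2 * (#ℬ - 1) : ℕ) : ℝ) := by exact_mod_cast (by omega)
  refine le_of_mul_le_mul_left ?_ hpos
  calc ((2 * (#ℬ - 1) : ℕ) : ℝ) * δ (ℬ.sup id)
      ≤ ∑ A ∈ ℬ, ∑ B ∈ ℬ.erase A, δ (A ∪ B) := havg
    _ ≤ ∑ A ∈ ℬ, ∑ B ∈ ℬ.erase A, (f A + f B) :=
      sum_le_sum fun A _ => sum_le_sum fun B _ => hf A B
    _ = _ := sum_sum_erase_add ℬ

end PairAverage

def Splits (S : Finset Y × Finset Y) (A : Finset Y) : Prop :=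
  (A ∩ S.1).Nonempty ∧ (A ∩ S.2).Nonempty

instance (S : Finset Y × Finset Y) : DecidablePred (Splits S) :=
  fun _ => inferInstanceAs (Decidable (_ ∧ _))

theorem Splits.mono {S : Finset Y × Finset Y} {A B : Finset Y} (h : Splits S A) (hAB : A ⊆ B) :
    Splits S B :=
  ⟨h.1.mono (inter_subset_inter_right hAB), h.2.mono (inter_subset_inter_right hAB)⟩

theorem inter_snd_nonempty_of_not_inter_fst_nonempty {S : Finset Y × Finset Y} {A : Finset Y}
    (hA : A.Nonempty) (hcover : A ⊆ S.1 ∪ S.2) (h : ¬(A ∩ S.1).Nonempty) :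
    (A ∩ S.2).Nonempty := by
  obtain ⟨a, ha⟩ := hA
  rcases mem_union.1 (hcover ha) with h1 | h2
  · exact absurd ⟨a, mem_inter.2 ⟨ha, h1⟩⟩ h
  · exact ⟨a, mem_inter.2 ⟨ha, h2⟩⟩

def splitPartners (S : Finset Y × Finset Y) (ℬ : Finset (Finset Y)) (A : Finset Y) :
    Finset (Finset Y) :=
  (ℬ.erase A).filter fun B => Splits S (A ∪ B)

theorem card_splitPartners_of_splits {S : Finset Y × Finset Y} {ℬ : Finset (Finset Y)}
    {A : Finset Y} (hA : A ∈ ℬ) (hS : Splits S A) : #(splitPartners S ℬ A) = #ℬ - 1 := by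
  rw [splitPartners, filter_true_of_mem fun B _ => hS.mono subset_union_left,
    card_erase_of_mem hA]

theorem two_mul_card_pred_le_sum_card_splitPartners_of_splits {S : Finset Y × Finset Y}
    {ℬ : Finset (Finset Y)} {A₀ : Finset Y} (hA₀ : A₀ ∈ ℬ) (hS : Splits S A₀) :
    2 * (#ℬ - 1) ≤ ∑ A ∈ ℬ, #(splitPartners S ℬ A) := by
  have hpartner : ∀ A ∈ ℬ.erase A₀, 1 ≤ #(splitPartners S ℬ A) := fun A hA =>
    card_pos.2 ⟨A₀, mem_filter.2
      ⟨mem_erase.2 ⟨fun h => (ne_of_mem_erase hA) h.symm, hA₀⟩, hS.mono subset_union_right⟩⟩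
  have hrest : #ℬ - 1 ≤ ∑ A ∈ ℬ.erase A₀, #(splitPartners S ℬ A) := by
    simpa [card_erase_of_mem hA₀] using sum_le_sum hpartner
  rw [← add_sum_erase _ _ hA₀, card_splitPartners_of_splits hA₀ hS]
  omega

/-- Pairing a member meeting `S.1` with one missing `S.1` always gives a set split by `S`. -/
theorem two_mul_card_mul_le_sum_card_splitPartners {S : Finset Y × Finset Y}
    {ℬ : Finset (Finset Y)} (hne : ∅ ∉ ℬ) (hcover : ∀ A ∈ ℬ, A ⊆ S.1 ∪ S.2) :
    2 * (#(ℬ.filter fun A => (A ∩ S.1).Nonempty) * #(ℬ.filter fun A => ¬(A ∩ S.1).Nonempty))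
      ≤ ∑ A ∈ ℬ, #(splitPartners S ℬ A) := by
  set P := ℬ.filter fun A => (A ∩ S.1).Nonempty
  set Q := ℬ.filter fun A => ¬(A ∩ S.1).Nonempty
  have hsplits : ∀ A ∈ P, ∀ B ∈ Q, A ≠ B ∧ Splits S (A ∪ B) := by
    intro A hA B hB
    obtain ⟨hAℬ, hA1⟩ := mem_filter.1 hA
    obtain ⟨hBℬ, hB1⟩ := mem_filter.1 hB
    have hB2 := inter_snd_nonempty_of_not_inter_fst_nonempty
      (nonempty_iff_ne_empty.2 fun h => hne (h ▸ hBℬ)) (hcover B hBℬ) hB1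
    exact ⟨fun h => hB1 (h ▸ hA1), hA1.mono (inter_subset_inter_right subset_union_left),
      hB2.mono (inter_subset_inter_right subset_union_right)⟩
  have hP : ∀ A ∈ P, #Q ≤ #(splitPartners S ℬ A) := fun A hA =>
    card_le_card fun B hB => mem_filter.2
      ⟨mem_erase.2 ⟨(hsplits A hA B hB).1.symm, (mem_filter.1 hB).1⟩, (hsplits A hA B hB).2⟩
  have hQ : ∀ B ∈ Q, #P ≤ #(splitPartners S ℬ B) := fun B hB =>
    card_le_card fun A hA => mem_filter.2
      ⟨mem_erase.2 ⟨(hsplits A hA B hB).1, (mem_filter.1 hA).1⟩,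
        union_comm A B ▸ (hsplits A hA B hB).2⟩
  calc 2 * (#P * #Q) = ∑ _A ∈ P, #Q + ∑ _B ∈ Q, #P := by simp only [sum_const, smul_eq_mul]; ring
    _ ≤ ∑ A ∈ P, #(splitPartners S ℬ A) + ∑ B ∈ Q, #(splitPartners S ℬ B) :=
      add_le_add (sum_le_sum hP) (sum_le_sum hQ)
    _ = ∑ A ∈ ℬ, #(splitPartners S ℬ A) := sum_filter_add_sum_filter_not _ _ _

theorem two_mul_card_pred_le_sum_card_splitPartners {S : Finset Y × Finset Y}
    {ℬ : Finset (Finset Y)} (hne : ∅ ∉ ℬ) (hcover : ∀ A ∈ ℬ, A ⊆ S.1 ∪ S.2)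
    (hS : Splits S (ℬ.sup id)) :
    2 * (#ℬ - 1) ≤ ∑ A ∈ ℬ, #(splitPartners S ℬ A) := by
  by_cases hA₀ : ∃ A₀ ∈ ℬ, Splits S A₀
  · obtain ⟨A₀, hA₀, hsplit⟩ := hA₀
    exact two_mul_card_pred_le_sum_card_splitPartners_of_splits hA₀ hsplit
  push Not at hA₀
  have hmeets : ∀ T : Finset Y, (ℬ.sup id ∩ T).Nonempty → ∃ A ∈ ℬ, (A ∩ T).Nonempty := by
    rintro T ⟨y, hy⟩
    obtain ⟨A, hA, hyA⟩ := mem_sup.1 (mem_inter.1 hy).1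
    exact ⟨A, hA, y, mem_inter.2 ⟨hyA, (mem_inter.1 hy).2⟩⟩
  obtain ⟨A, hA, hA1⟩ := hmeets _ hS.1
  obtain ⟨B, hB, hB2⟩ := hmeets _ hS.2
  have hpartners := two_mul_card_mul_le_sum_card_splitPartners hne hcover
  have hpq := card_filter_add_card_filter_not (s := ℬ) fun A => (A ∩ S.1).Nonempty
  set p := #(ℬ.filter fun A => (A ∩ S.1).Nonempty)
  set q := #(ℬ.filter fun A => ¬(A ∩ S.1).Nonempty)
  have hp : 1 ≤ p := card_pos.2 ⟨A, mem_filter.2 ⟨hA, hA1⟩⟩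
  have hq : 1 ≤ q := card_pos.2 ⟨B, mem_filter.2 ⟨hB, fun hB1 => hA₀ B hB ⟨hB1, hB2⟩⟩⟩
  have : p + q ≤ p * q + 1 := by nlinarith
  omega

def splitDiversity (𝒮 : Finset (Finset Y × Finset Y)) (α : Finset Y × Finset Y → ℝ)
    (A : Finset Y) : ℝ :=
  ∑ S ∈ 𝒮, if Splits S A then α S else 0

variable {𝒮 : Finset (Finset Y × Finset Y)} {α : Finset Y × Finset Y → ℝ}

theorem splitDiversity_nonneg (hα : ∀ S ∈ 𝒮, 0 ≤ α S) (A : Finset Y) :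
    0 ≤ splitDiversity 𝒮 α A :=
  sum_nonneg fun S hS => by split_ifs <;> simp [hα S hS]

@[simp]
theorem splitDiversity_empty : splitDiversity 𝒮 α ∅ = 0 := by
  simp [splitDiversity, Splits]

theorem sum_sum_erase_splitDiversity_union (ℬ : Finset (Finset Y)) :
    ∑ A ∈ ℬ, ∑ B ∈ ℬ.erase A, splitDiversity 𝒮 α (A ∪ B) =
      ∑ S ∈ 𝒮, α S * ∑ A ∈ ℬ, (#(splitPartners S ℬ A) : ℝ) := by
  simp_rw [splitDiversity, splitPartners, sum_comm (s := ℬ.erase _), mul_sum]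
  rw [sum_comm]
  refine sum_congr rfl fun S _ => sum_congr rfl fun A _ => ?_
  rw [← sum_filter, sum_const, nsmul_eq_mul, mul_comm]

theorem two_mul_card_pred_mul_splitDiversity_sup_le (hα : ∀ S ∈ 𝒮, 0 ≤ α S)
    {ℬ : Finset (Finset Y)} (hne : ∅ ∉ ℬ) (hcover : ∀ S ∈ 𝒮, ∀ A ∈ ℬ, A ⊆ S.1 ∪ S.2) :
    ((2 * (#ℬ - 1) : ℕ) : ℝ) * splitDiversity 𝒮 α (ℬ.sup id) ≤
      ∑ A ∈ ℬ, ∑ B ∈ ℬ.erase A, splitDiversity 𝒮 α (A ∪ B) := by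
  rw [sum_sum_erase_splitDiversity_union, splitDiversity, mul_sum]
  refine sum_le_sum fun S hS => ?_
  split_ifs with hsplit
  · rw [mul_comm]
    exact mul_le_mul_of_nonneg_left
      (mod_cast two_mul_card_pred_le_sum_card_splitPartners hne (hcover S hS) hsplit) (hα S hS)
  · simpa using mul_nonneg (hα S hS) (sum_nonneg fun A _ => Nat.cast_nonneg _)

theorem splitDiversity_sup_le_sum (hα : ∀ S ∈ 𝒮, 0 ≤ α S) {𝒜 : Finset (Finset Y)}
    (hcover : ∀ S ∈ 𝒮, ∀ A ∈ 𝒜, A ⊆ S.1 ∪ S.2) {f : Finset Y → ℝ} (hf₀ : f ∅ = 0)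
    (hf : ∀ A B, splitDiversity 𝒮 α (A ∪ B) ≤ f A + f B) :
    splitDiversity 𝒮 α (𝒜.sup id) ≤ ∑ A ∈ 𝒜, f A := by
  rw [← sup_erase_bot, ← sum_erase 𝒜 hf₀, bot_eq_empty]
  set ℬ := 𝒜.erase ∅
  obtain hn | hn | hn : #ℬ = 0 ∨ #ℬ = 1 ∨ 2 ≤ #ℬ := by omega
  · simp [card_eq_zero.1 hn]
  · obtain ⟨A, hA⟩ := card_eq_one.1 hn
    simpa [hA, hf₀] using hf A ∅
  · exact sup_le_sum_of_le_pair_average hf hn <|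
      two_mul_card_pred_mul_splitDiversity_sup_le hα (notMem_erase _ _)
        fun S hS A hA => hcover S hS A (mem_of_mem_erase hA)

end SplitDiversity

/-- Theorem 7.2: for a split system diversity `δ = δ_{(𝒮,α)}` one has
`P(δ) = P⁻(δ)`, and consequently the tight-spans (sets of minimal elements)
of the two polyhedra coincide. -/
theorem stmt_16 {Y : Type*} [Fintype Y] [DecidableEq Y]
    (𝒮 : Finset (Finset Y × Finset Y))
    (h𝒮 : ∀ S ∈ 𝒮, S.1.Nonempty ∧ S.2.Nonempty ∧ Disjoint S.1 S.2 ∧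
      S.1 ∪ S.2 = Finset.univ)
    (α : Finset Y × Finset Y → ℝ) (hα : ∀ S ∈ 𝒮, 0 < α S)
    (δ : Finset Y → ℝ)
    (hδ : ∀ A : Finset Y,
      δ A = ∑ S ∈ 𝒮, if A ∩ S.1 ≠ ∅ ∧ A ∩ S.2 ≠ ∅ then α S else 0) :
    let P : Set (Finset Y → ℝ) :=
      {f | f ∅ = 0 ∧ ∀ 𝒜 : Finset (Finset Y), δ (𝒜.sup id) ≤ ∑ A ∈ 𝒜, f A}
    let Pm : Set (Finset Y → ℝ) :=
      {f | f ∅ = 0 ∧ ∀ A B : Finset Y, δ (A ∪ B) ≤ f A + f B}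
    P = Pm ∧
      {f | f ∈ P ∧ ∀ g ∈ P, g ≤ f → g = f} =
        {f | f ∈ Pm ∧ ∀ g ∈ Pm, g ≤ f → g = f} := by
  intro P Pm
  obtain rfl : δ = SplitDiversity.splitDiversity 𝒮 α := funext fun A => by
    simp [hδ, SplitDiversity.splitDiversity, SplitDiversity.Splits, nonempty_iff_ne_empty]
  have hα' : ∀ S ∈ 𝒮, 0 ≤ α S := fun S hS => (hα S hS).le
  have hP : P = Pm := Set.ext fun f =>
    ⟨fun ⟨hf₀, hf⟩ => ⟨hf₀, SplitDiversity.union_le_add_of_sup_le_sum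
      (SplitDiversity.splitDiversity_nonneg hα') hf⟩,
      fun ⟨hf₀, hf⟩ => ⟨hf₀, fun 𝒜 => SplitDiversity.splitDiversity_sup_le_sum hα'
        (fun S hS A _ => (h𝒮 S hS).2.2.2 ▸ subset_univ A) hf₀ hf⟩⟩
  exact ⟨hP, by rw [hP]⟩
end

section
/- Let Y be a finite set, 𝒫 a compatible finite set of partial splits of the set ncP(Y) of nonempty subsets of Y, α : 𝒫 → ℝ with α(P) > 0 for all P ∈ 𝒫, and δ a diversity on Y such that d_δ = d_{(𝒫,α)}, i.e., d_δ(A,B) = ∑_{P∈𝒫} α(P)·d_P(A,B) for all nonempty A, B ⊆ Y. Let {𝒜,𝒝} ∈ 𝒫, A ∈ 𝒜, B ∈ 𝒝, and let A' be a nonempty subset of Y with A' ⊆ A and d_δ(A',B) ≥ d_δ(A,B). Then A' ∈ 𝒜. -/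
/-!
Since `δ ≥ 0` on nonempty sets and `A' ∪ A = A`, we get `d_δ(A', A) = 0`, so no split of `𝒫`
separates `A'` from `A`. If `A' ∉ 𝒜`, compatibility with `{𝒜, 𝒝}` then forces every split that
separates `A'` from `B` to separate `A` from `B` as well, while `{𝒜, 𝒝}` itself separates `A`
from `B` but not `A'` from `B`. Hence `d_δ(A', B) < d_δ(A, B)`.
-/

section

open Finset

variable {Y : Type*}

section Diversity

variable [DecidableEq Y]

theorem diversity_nonneg {δ : Finset Y → ℝ}
    (hδ : ∀ A C B : Finset Y, B.Nonempty → δ (A ∪ C) ≤ δ (A ∪ B) + δ (B ∪ C))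
    {S : Finset Y} (hS : S.Nonempty) : 0 ≤ δ S := by
  obtain ⟨b, hb⟩ := hS
  have hbS : {b} ⊆ S := singleton_subset_iff.mpr hb
  have h := hδ S S {b} (singleton_nonempty b)
  rw [union_self, union_eq_left.mpr hbS, union_eq_right.mpr hbS] at h
  linarith

def diversityDist (δ : Finset Y → ℝ) (A B : Finset Y) : ℝ :=
  if A = B then 0 else max 0 (δ (A ∪ B) - δ A - δ B)

theorem diversityDist_eq_zero_of_subset {δ : Finset Y → ℝ}
    (hδ : ∀ A C B : Finset Y, B.Nonempty → δ (A ∪ C) ≤ δ (A ∪ B) + δ (B ∪ C))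
    {A' A : Finset Y} (hA' : A'.Nonempty) (hsub : A' ⊆ A) : diversityDist δ A' A = 0 := by
  unfold diversityDist
  split_ifs
  · rfl
  · rw [union_eq_right.mpr hsub]
    have := diversity_nonneg hδ hA'
    exact max_eq_left (by linarith)

end Diversity

namespace PartialSplit

abbrev Separates (P : Finset (Finset Y) × Finset (Finset Y)) (A B : Finset Y) : Prop :=
  (A ∈ P.1 ∧ B ∈ P.2) ∨ (A ∈ P.2 ∧ B ∈ P.1)

abbrev Compatible (P Q : Finset (Finset Y) × Finset (Finset Y)) : Prop :=
  (P.1 ⊆ Q.1 ∧ Q.2 ⊆ P.2) ∨ (P.1 ⊆ Q.2 ∧ Q.1 ⊆ P.2) ∨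
    (Q.1 ⊆ P.1 ∧ P.2 ⊆ Q.2) ∨ (Q.2 ⊆ P.1 ∧ P.2 ⊆ Q.1)

theorem not_separates_of_not_mem {Q : Finset (Finset Y) × Finset (Finset Y)}
    (hQ : Disjoint Q.1 Q.2) {A' B : Finset Y} (hA' : A' ∉ Q.1) (hB : B ∈ Q.2) :
    ¬ Separates Q A' B := by
  rintro (⟨h, -⟩ | ⟨-, h⟩)
  · exact hA' h
  · exact disjoint_left.mp hQ h hB

theorem separates_of_compatible {P Q : Finset (Finset Y) × Finset (Finset Y)}
    (hPQ : Compatible P Q) (hQ : Disjoint Q.1 Q.2) {A A' B : Finset Y}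
    (hA : A ∈ Q.1) (hB : B ∈ Q.2) (hA' : A' ∉ Q.1) (hA'A : ¬ Separates P A' A)
    (hA'B : Separates P A' B) : Separates P A B := by
  have hBQ1 : B ∉ Q.1 := disjoint_right.mp hQ hB
  rcases hPQ with ⟨h1, -⟩ | ⟨-, h2⟩ | ⟨h1, -⟩ | ⟨h1, h2⟩
  · rcases hA'B with ⟨ha, -⟩ | ⟨-, hb⟩
    exacts [absurd (h1 ha) hA', absurd (h1 hb) hBQ1]
  · rcases hA'B with ⟨ha, -⟩ | ⟨-, hb⟩
    exacts [absurd (Or.inl ⟨ha, h2 hA⟩) hA'A, Or.inr ⟨h2 hA, hb⟩]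
  · rcases hA'B with ⟨-, hb⟩ | ⟨ha, -⟩
    exacts [Or.inl ⟨h1 hA, hb⟩, absurd (Or.inr ⟨ha, h1 hA⟩) hA'A]
  · rcases hA'B with ⟨-, hb⟩ | ⟨ha, -⟩
    exacts [absurd (h2 hb) hBQ1, absurd (h2 ha) hA']

variable [DecidableEq Y] (PS : Finset (Finset (Finset Y) × Finset (Finset Y)))
  (α : Finset (Finset Y) × Finset (Finset Y) → ℝ)

def splitDist (A B : Finset Y) : ℝ :=
  ∑ P ∈ PS, α P * if Separates P A B then 1 else 0

variable {PS α}

theorem splitDist_term_nonneg (hα : ∀ P ∈ PS, 0 < α P) (A B : Finset Y)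
    {P : Finset (Finset Y) × Finset (Finset Y)} (hP : P ∈ PS) :
    0 ≤ α P * if Separates P A B then (1 : ℝ) else 0 := by
  split_ifs <;> simp [(hα P hP).le]

theorem not_separates_of_splitDist_eq_zero (hα : ∀ P ∈ PS, 0 < α P) {A B : Finset Y}
    (h : splitDist PS α A B = 0) {P : Finset (Finset Y) × Finset (Finset Y)} (hP : P ∈ PS) :
    ¬ Separates P A B := fun hsep => by
  have hterm := (sum_eq_zero_iff_of_nonneg fun _ => splitDist_term_nonneg hα A B).mp h P hP
  rw [if_pos hsep, mul_one] at hterm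
  exact (hα P hP).ne' hterm

theorem splitDist_lt_of_separates_imp (hα : ∀ P ∈ PS, 0 < α P) {A A' B : Finset Y}
    (himp : ∀ P ∈ PS, Separates P A' B → Separates P A B)
    {Q : Finset (Finset Y) × Finset (Finset Y)} (hQ : Q ∈ PS)
    (hsep : Separates Q A B) (hnsep : ¬ Separates Q A' B) :
    splitDist PS α A' B < splitDist PS α A B := by
  refine sum_lt_sum (fun P hP => ?_) ⟨Q, hQ, ?_⟩
  · by_cases hP' : Separates P A' B
    · rw [if_pos hP', if_pos (himp P hP hP')]
    · rw [if_neg hP', mul_zero]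
      exact splitDist_term_nonneg hα A B hP
  · rw [if_neg hnsep, if_pos hsep, mul_zero, mul_one]
    exact hα Q hQ

end PartialSplit

end

open PartialSplit in
theorem stmt_18_general {Y : Type*} [DecidableEq Y]
    (PS : Finset (Finset (Finset Y) × Finset (Finset Y)))
    (hsplit : ∀ P ∈ PS, P.1.Nonempty ∧ P.2.Nonempty ∧ Disjoint P.1 P.2 ∧
      (∀ A ∈ P.1, A ≠ (∅ : Finset Y)) ∧ (∀ B ∈ P.2, B ≠ (∅ : Finset Y)))
    (hcompat : ∀ P ∈ PS, ∀ Q ∈ PS,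
      (P.1 ⊆ Q.1 ∧ Q.2 ⊆ P.2) ∨ (P.1 ⊆ Q.2 ∧ Q.1 ⊆ P.2) ∨
        (Q.1 ⊆ P.1 ∧ P.2 ⊆ Q.2) ∨ (Q.2 ⊆ P.1 ∧ P.2 ⊆ Q.1))
    (α : Finset (Finset Y) × Finset (Finset Y) → ℝ) (hα : ∀ P ∈ PS, 0 < α P)
    (δ : Finset Y → ℝ)
    (hδ1 : ∀ A C B : Finset Y, B.Nonempty → δ (A ∪ C) ≤ δ (A ∪ B) + δ (B ∪ C))
    (dδ : Finset Y → Finset Y → ℝ)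
    (hdδ : ∀ A B : Finset Y,
      dδ A B = if A = B then 0 else max 0 (δ (A ∪ B) - δ A - δ B))
    (heq : ∀ A B : Finset Y, A ≠ ∅ → B ≠ ∅ →
      dδ A B = ∑ P ∈ PS, α P *
        (if (A ∈ P.1 ∧ B ∈ P.2) ∨ (A ∈ P.2 ∧ B ∈ P.1) then 1 else 0))
    (cA cB : Finset (Finset Y)) (hP : (cA, cB) ∈ PS)
    (A : Finset Y) (hA : A ∈ cA) (B : Finset Y) (hB : B ∈ cB)
    (A' : Finset Y) (hA' : A' ≠ ∅) (hsub : A' ⊆ A)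
    (hge : dδ A B ≤ dδ A' B) :
    A' ∈ cA := by
  obtain ⟨-, -, hdisj, hAne, hBne⟩ := hsplit (cA, cB) hP
  have hd : ∀ A B : Finset Y, A ≠ ∅ → B ≠ ∅ → dδ A B = splitDist PS α A B := heq
  have hA'A : dδ A' A = 0 := by
    rw [hdδ]
    exact diversityDist_eq_zero_of_subset hδ1 (Finset.nonempty_iff_ne_empty.mpr hA') hsub
  have hnsep : ∀ P ∈ PS, ¬ Separates P A' A := fun P hP' =>
    not_separates_of_splitDist_eq_zero hα (by rw [← hd _ _ hA' (hAne A hA), hA'A]) hP'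
  by_contra hA'cA
  have hlt : dδ A' B < dδ A B := by
    rw [hd _ _ hA' (hBne B hB), hd _ _ (hAne A hA) (hBne B hB)]
    exact splitDist_lt_of_separates_imp hα
      (fun P hP' => separates_of_compatible (hcompat P hP' _ hP) hdisj hA hB hA'cA (hnsep P hP'))
      hP (Or.inl ⟨hA, hB⟩) (not_separates_of_not_mem hdisj hA'cA hB)
  exact hlt.not_ge hge

/-- Lemma 8.3(a): let `PS` be a compatible set of partial splits of the set of
nonempty subsets of `Y` with positive weights `α`, and `δ` a diversity on `Y`
with `d_δ = d_{(PS,α)}`. If `{cA,cB} ∈ PS`, `A ∈ cA`, `B ∈ cB`, `A' ⊆ A` is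
nonempty and `d_δ(A',B) ≥ d_δ(A,B)`, then `A' ∈ cA`. -/
theorem stmt_18 {Y : Type*} [Fintype Y] [DecidableEq Y]
    (PS : Finset (Finset (Finset Y) × Finset (Finset Y)))
    (hsplit : ∀ P ∈ PS, P.1.Nonempty ∧ P.2.Nonempty ∧ Disjoint P.1 P.2 ∧
      (∀ A ∈ P.1, A ≠ (∅ : Finset Y)) ∧ (∀ B ∈ P.2, B ≠ (∅ : Finset Y)))
    (hcompat : ∀ P ∈ PS, ∀ Q ∈ PS,
      (P.1 ⊆ Q.1 ∧ Q.2 ⊆ P.2) ∨ (P.1 ⊆ Q.2 ∧ Q.1 ⊆ P.2) ∨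
        (Q.1 ⊆ P.1 ∧ P.2 ⊆ Q.2) ∨ (Q.2 ⊆ P.1 ∧ P.2 ⊆ Q.1))
    (α : Finset (Finset Y) × Finset (Finset Y) → ℝ) (hα : ∀ P ∈ PS, 0 < α P)
    (δ : Finset Y → ℝ)
    (hδ1 : ∀ A C B : Finset Y, B.Nonempty → δ (A ∪ C) ≤ δ (A ∪ B) + δ (B ∪ C))
    (hδ2 : ∀ A : Finset Y, A.card ≤ 1 → δ A = 0)
    (dδ : Finset Y → Finset Y → ℝ)
    (hdδ : ∀ A B : Finset Y,
      dδ A B = if A = B then 0 else max 0 (δ (A ∪ B) - δ A - δ B))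
    (heq : ∀ A B : Finset Y, A ≠ ∅ → B ≠ ∅ →
      dδ A B = ∑ P ∈ PS, α P *
        (if (A ∈ P.1 ∧ B ∈ P.2) ∨ (A ∈ P.2 ∧ B ∈ P.1) then 1 else 0))
    (cA cB : Finset (Finset Y)) (hP : (cA, cB) ∈ PS)
    (A : Finset Y) (hA : A ∈ cA) (B : Finset Y) (hB : B ∈ cB)
    (A' : Finset Y) (hA' : A' ≠ ∅) (hsub : A' ⊆ A)
    (hge : dδ A B ≤ dδ A' B) :
    A' ∈ cA :=
  stmt_18_general PS hsplit hcompat α hα δ hδ1 dδ hdδ heq cA cB hP A hA B hB A' hA' hsub hge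
end
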